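/- Let f_1,…,f_m ∈ ℝ[x_1,…,x_n] satisfy the regularity hypothesis, and let ℳ ⊆ ℝⁿ be a finite set such that ℳ ∩ cl(C) ≠ ∅ for every connected component C of the realization of each feasible sign condition over f_1,…,f_m (cl denoting Euclidean closure). For z ∈ ℝⁿ let σ(z) ∈ {<,=,>}^m be the sign condition with f_i(z) σ(z)_i 0 for all i, and for σ ∈ {<,=,>}^m let P_σ be the set of all σ̂ ∈ {<,=,>}^m such that σ̂_i = σ_i for every i with σ_i ≠ '='. Then a sign condition σ̂ ∈ {<,=,>}^m is feasible if and only if σ̂ ∈ P_{σ(z)} for some z ∈ ℳ; that is, the set of all feasible sign conditions over f_1,…,f_m equals ⋃_{z ∈ ℳ} P_{σ(z)}. -/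

import Mathlib

open MvPolynomial Set

/-- A sign symbol among `<, =, >`. -/
inductive Sign3 | lt | eq | gt
deriving DecidableEq

/-- The relation "`t σ 0`" for a sign symbol `σ`. -/
def Sign3.holds : Sign3 → ℝ → Prop
  | .lt, t => t < 0
  | .eq, t => t = 0
  | .gt, t => 0 < t

/-- The sign of a real number, as a sign symbol. -/
noncomputable def signOf (t : ℝ) : Sign3 :=
  if t < 0 then Sign3.lt else if t = 0 then Sign3.eq else Sign3.gt

/-- The regularity hypothesis: for every `x ∈ ℂⁿ` and every subset `S` of the indices,
if all `f_i`, `i ∈ S`, vanish at `x`, then their gradients at `x` are linearly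
independent over `ℂ`. -/
def RegHyp {n m : ℕ} (f : Fin m → MvPolynomial (Fin n) ℝ) : Prop :=
  ∀ (x : Fin n → ℂ) (S : Set (Fin m)),
    (∀ i ∈ S, eval x ((f i).map (algebraMap ℝ ℂ)) = 0) →
    LinearIndependent ℂ
      (fun i : S => fun k : Fin n => eval x (pderiv k ((f i.1).map (algebraMap ℝ ℂ))))

/-- The realization of a sign condition `σ` over the family `f`. -/
def realization {n m : ℕ} (f : Fin m → MvPolynomial (Fin n) ℝ) (σ : Fin m → Sign3) :
    Set (Fin n → ℝ) :=
  {x | ∀ i, (σ i).holds (eval x (f i))}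

open Topology Filter

/-! If `σ` is feasible, the closure of a component of its realization contains some `z ∈ ℳ`,
and by continuity every `f_i` with `f_i(z) ≠ 0` has at `z` the sign `σ_i` it has on the
realization; hence `σ ∈ P_{σ(z)}`.

Conversely, let `σ ∈ P_{σ(z)}`. Restricted to real points, regularity says that the `f_i`
vanishing at `z` have linearly independent gradients there, so `F = (f_i)_{f_i(z) = 0}` is a
submersion at `z` and maps every neighbourhood of `z` onto a neighbourhood of `0`. Such a
neighbourhood contains a point with any prescribed signs, and a preimage of it close enough to
`z` that the other `f_i` keep their signs realizes `σ`. -/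

theorem Sign3.holds_iff_signOf_eq {σ : Sign3} {t : ℝ} : σ.holds t ↔ signOf t = σ := by
  unfold signOf
  cases σ <;> split_ifs <;> simp [Sign3.holds] <;> grind

theorem signOf_eq_eq_iff {t : ℝ} : signOf t = .eq ↔ t = 0 :=
  Sign3.holds_iff_signOf_eq.symm

theorem signOf_of_neg {t : ℝ} (ht : t < 0) : signOf t = .lt :=
  Sign3.holds_iff_signOf_eq.1 ht

theorem signOf_of_pos {t : ℝ} (ht : 0 < t) : signOf t = .gt :=
  Sign3.holds_iff_signOf_eq.1 ht

theorem eventually_signOf_eq {X : Type*} [TopologicalSpace X] {g : X → ℝ} {z : X}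
    (hg : ContinuousAt g z) (hz : g z ≠ 0) : ∀ᶠ x in 𝓝 z, signOf (g x) = signOf (g z) := by
  rcases hz.lt_or_gt with hneg | hpos
  · filter_upwards [hg.eventually (Iio_mem_nhds hneg)] with x hx
    rw [signOf_of_neg hx, signOf_of_neg hneg]
  · filter_upwards [hg.eventually (Ioi_mem_nhds hpos)] with x hx
    rw [signOf_of_pos hx, signOf_of_pos hpos]

theorem eq_signOf_of_mem_closure {X : Type*} [TopologicalSpace X] {g : X → ℝ} {S : Set X}
    {σ : Sign3} (hS : ∀ x ∈ S, σ.holds (g x)) {z : X} (hz : z ∈ closure S)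
    (hg : ContinuousAt g z) (hgz : signOf (g z) ≠ .eq) : σ = signOf (g z) := by
  obtain ⟨x, hx, hxS⟩ :=
    mem_closure_iff_nhds.1 hz _ (eventually_signOf_eq hg (mt signOf_eq_eq_iff.2 hgz))
  rw [← hx, Sign3.holds_iff_signOf_eq.1 (hS x hxS)]

def Sign3.toReal : Sign3 → ℝ
  | .lt => -1
  | .eq => 0
  | .gt => 1

theorem signOf_mul_toReal {ε : ℝ} (hε : 0 < ε) (τ : Sign3) : signOf (ε * τ.toReal) = τ := by
  rw [← Sign3.holds_iff_signOf_eq]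
  cases τ <;> simp [Sign3.holds, Sign3.toReal, hε]

theorem exists_signOf_eq_of_mem_nhds_zero {ι : Type*} {N : Set (ι → ℝ)} (hN : N ∈ 𝓝 0)
    (τ : ι → Sign3) : ∃ v ∈ N, ∀ i, signOf (v i) = τ i := by
  have hlim : Tendsto (fun ε : ℝ => ε • fun i => (τ i).toReal) (𝓝[>] 0) (𝓝 0) :=
    ((continuous_id.smul continuous_const).tendsto' 0 0 (zero_smul ℝ _)).mono_left
      nhdsWithin_le_nhds
  obtain ⟨ε, hεN, hε⟩ := ((hlim.eventually hN).and self_mem_nhdsWithin).exists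
  exact ⟨_, hεN, fun i => signOf_mul_toReal hε (τ i)⟩

theorem HasStrictFDerivAt.exists_mem_signOf_eq {E ι : Type*} [NormedAddCommGroup E]
    [NormedSpace ℝ E] [CompleteSpace E] [Fintype ι] {F : E → ι → ℝ} {F' : E →L[ℝ] ι → ℝ}
    {z : E} (hF : HasStrictFDerivAt F F' z) (hF' : F'.range = ⊤) (hz : F z = 0)
    {U : Set E} (hU : U ∈ 𝓝 z) (τ : ι → Sign3) : ∃ x ∈ U, ∀ i, signOf (F x i) = τ i := by
  have hFU : F '' U ∈ 𝓝 0 := hz ▸ hF.map_nhds_eq_of_surj hF' ▸ image_mem_map hU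
  obtain ⟨_, ⟨x, hxU, rfl⟩, hx⟩ := exists_signOf_eq_of_mem_nhds_zero hFU τ
  exact ⟨x, hxU, hx⟩

namespace MvPolynomial

variable {𝕜 ι : Type*} [NontriviallyNormedField 𝕜] [Fintype ι]

noncomputable def fderivEval (p : MvPolynomial ι 𝕜) (z : ι → 𝕜) : (ι → 𝕜) →L[𝕜] 𝕜 :=
  ∑ k, eval z (pderiv k p) • ContinuousLinearMap.proj k

theorem fderivEval_apply (p : MvPolynomial ι 𝕜) (z v : ι → 𝕜) :
    fderivEval p z v = ∑ k, eval z (pderiv k p) * v k := by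
  simp [fderivEval]

theorem fderivEval_C (a : 𝕜) (z : ι → 𝕜) : fderivEval (C a) z = 0 := by
  ext v
  simp [fderivEval_apply]

theorem fderivEval_add (p q : MvPolynomial ι 𝕜) (z : ι → 𝕜) :
    fderivEval (p + q) z = fderivEval p z + fderivEval q z := by
  ext v
  simp [fderivEval_apply, add_mul, Finset.sum_add_distrib]

theorem fderivEval_mul_X (p : MvPolynomial ι 𝕜) (i : ι) (z : ι → 𝕜) :
    fderivEval (p * X i) z = eval z p • ContinuousLinearMap.proj i + z i • fderivEval p z := by
  classical
  ext v
  simp [fderivEval_apply, pderiv_X, Pi.single_apply, add_mul, Finset.sum_add_distrib,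
    Finset.mul_sum, mul_assoc, apply_ite, ite_mul]

theorem hasStrictFDerivAt_eval (p : MvPolynomial ι 𝕜) (z : ι → 𝕜) :
    HasStrictFDerivAt (fun x => eval x p) (fderivEval p z) z := by
  induction p using MvPolynomial.induction_on with
  | C a =>
    rw [fderivEval_C]
    exact (hasStrictFDerivAt_const a z).congr_of_eventuallyEq (.of_forall fun x => by simp)
  | add p q hp hq =>
    rw [fderivEval_add]
    exact (hp.add hq).congr_of_eventuallyEq (.of_forall fun x => by simp)
  | mul_X p i hp =>
    rw [fderivEval_mul_X]
    have hproj := (ContinuousLinearMap.proj i : (ι → 𝕜) →L[𝕜] 𝕜).hasStrictFDerivAt (x := z)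
    exact (hp.mul hproj).congr_of_eventuallyEq (.of_forall fun x => by simp)

theorem eval_map_ofReal {σ : Type*} (p : MvPolynomial σ ℝ) (z : σ → ℝ) :
    eval (fun k => (z k : ℂ)) (p.map (algebraMap ℝ ℂ)) = eval z p := by
  rw [eval_map]
  exact (eval₂_comp _ z p).symm

end MvPolynomial

theorem Matrix.mulVec_surjective_of_linearIndependent_row {R m n : Type*} [Field R] [Fintype m]
    [Fintype n] {A : Matrix m n R} (hA : LinearIndependent R A.row) :
    Function.Surjective A.mulVec :=
  (LinearMap.range_eq_top (f := A.mulVecLin)).1 <| Submodule.eq_top_of_finrank_eq <| by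
    rw [Module.finrank_fintype_fun_eq_card, ← hA.rank_matrix, Matrix.rank]

theorem LinearIndependent.of_ofReal {ι κ : Type*} {v : ι → κ → ℝ}
    (h : LinearIndependent ℂ fun i k => (v i k : ℂ)) : LinearIndependent ℝ v :=
  (h.restrict_scalars' ℝ).of_comp (LinearMap.compLeft Complex.ofRealCLM.toLinearMap κ)

theorem RegHyp.linearIndependent_pderiv {n m : ℕ} {f : Fin m → MvPolynomial (Fin n) ℝ}
    (hreg : RegHyp f) (z : Fin n → ℝ) :
    LinearIndependent ℝ fun i : {i | eval z (f i) = 0} => fun k => eval z (pderiv k (f i)) := by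
  apply LinearIndependent.of_ofReal
  have := hreg (fun k => (z k : ℂ)) {i | eval z (f i) = 0}
    fun i hi => by rw [eval_map_ofReal, hi, Complex.ofReal_zero]
  simpa only [pderiv_map, eval_map_ofReal] using this

theorem realization_nonempty_of_linearIndependent {n m : ℕ} (f : Fin m → MvPolynomial (Fin n) ℝ)
    {z : Fin n → ℝ}
    (hz : LinearIndependent ℝ fun i : {i | eval z (f i) = 0} => fun k => eval z (pderiv k (f i)))
    {σ : Fin m → Sign3} (hσ : ∀ i, signOf (eval z (f i)) ≠ .eq → σ i = signOf (eval z (f i))) :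
    (realization f σ).Nonempty := by
  set s : Set (Fin m) := {i | eval z (f i) = 0}
  let F : (Fin n → ℝ) → s → ℝ := fun x i => eval x (f i)
  have hF : HasStrictFDerivAt F (ContinuousLinearMap.pi fun i : s => fderivEval (f i) z) z :=
    hasStrictFDerivAt_pi.2 fun i => hasStrictFDerivAt_eval _ z
  have hF' : (ContinuousLinearMap.pi fun i : s => fderivEval (f i) z).range = ⊤ := by
    refine LinearMap.range_eq_top.2 fun y => ?_
    obtain ⟨x, rfl⟩ := Matrix.mulVec_surjective_of_linearIndependent_row hz y
    exact ⟨x, funext fun i => fderivEval_apply _ _ _⟩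
  have hU :
      {x | ∀ i, eval z (f i) ≠ 0 → signOf (eval x (f i)) = signOf (eval z (f i))} ∈ 𝓝 z := by
    refine eventually_all.2 fun i => ?_
    by_cases hi : eval z (f i) = 0
    · simp [hi]
    · filter_upwards [eventually_signOf_eq (continuous_eval (f i)).continuousAt hi] with x hx _
      exact hx
  obtain ⟨x, hxU, hx⟩ := hF.exists_mem_signOf_eq hF' (funext fun i => i.2) hU fun i => σ i
  refine ⟨x, fun i => Sign3.holds_iff_signOf_eq.2 ?_⟩
  by_cases hi : eval z (f i) = 0
  · exact hx ⟨i, hi⟩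
  · rw [hxU i hi, hσ i (mt signOf_eq_eq_iff.1 hi)]

theorem statement5_general (n m : ℕ) (f : Fin m → MvPolynomial (Fin n) ℝ) (hreg : RegHyp f)
    (M : Set (Fin n → ℝ))
    (hM : ∀ σ : Fin m → Sign3, ∀ x₀ ∈ realization f σ,
      (M ∩ closure (connectedComponentIn (realization f σ) x₀)).Nonempty) :
    ∀ σ' : Fin m → Sign3,
      (realization f σ').Nonempty ↔
        ∃ z ∈ M, ∀ i : Fin m,
          signOf (eval z (f i)) ≠ Sign3.eq → σ' i = signOf (eval z (f i)) := by
  intro σ'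
  constructor
  · rintro ⟨x₀, hx₀⟩
    obtain ⟨z, hzM, hz⟩ := hM σ' x₀ hx₀
    have hz : z ∈ closure (realization f σ') := closure_mono (connectedComponentIn_subset _ _) hz
    exact ⟨z, hzM, fun i => eq_signOf_of_mem_closure (S := realization f σ') (fun x hx => hx i) hz
      (continuous_eval (f i)).continuousAt⟩
  · rintro ⟨z, -, hz⟩
    exact realization_nonempty_of_linearIndependent f (hreg.linearIndependent_pderiv z) hz

theorem statement5 (n m : ℕ) (f : Fin m → MvPolynomial (Fin n) ℝ) (hreg : RegHyp f)
    (M : Set (Fin n → ℝ)) (hMfin : M.Finite)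
    (hM : ∀ σ : Fin m → Sign3, ∀ x₀ ∈ realization f σ,
      (M ∩ closure (connectedComponentIn (realization f σ) x₀)).Nonempty) :
    ∀ σ' : Fin m → Sign3,
      (realization f σ').Nonempty ↔
        ∃ z ∈ M, ∀ i : Fin m,
          signOf (eval z (f i)) ≠ Sign3.eq → σ' i = signOf (eval z (f i)) :=
  statement5_general n m f hreg M hM
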